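/- In the coalescence setting (G is the coalescence of H₁ and H₂ via the non-isolated vertex x), suppose G is weak bicritical and y is a vertex of H₁ that is not a critical vertex of H₁. Then γ(H₁ − y) = γ(H₁). -/
import Mathlib


open SimpleGraph Set

/-- `S` is a dominating set of the induced subgraph of `G` on the vertex set `A`:
`S ⊆ A` and every vertex of `A` is in the closed neighborhood of some vertex of `S`. -/
def IsDomOn {V : Type*} (G : SimpleGraph V) (A S : Set V) : Prop :=
  S ⊆ A ∧ ∀ v ∈ A, ∃ s ∈ S, s = v ∨ G.Adj s v

/-- The domination number of the induced subgraph of `G` on the vertex set `A`. -/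
noncomputable def domNumOn {V : Type*} (G : SimpleGraph V) (A : Set V) : ℕ :=
  sInf {n | ∃ S : Set V, IsDomOn G A S ∧ S.ncard = n}

/-- The domination number of `G`. -/
noncomputable def domNum {V : Type*} (G : SimpleGraph V) : ℕ :=
  domNumOn G Set.univ

/-- `y` is a critical vertex of the induced subgraph of `G` on `A`:
deleting `y` decreases the domination number. -/
def IsCritVertexOn {V : Type*} (G : SimpleGraph V) (A : Set V) (y : V) : Prop :=
  domNumOn G (A \ {y}) < domNumOn G A

/-- The induced subgraph of `G` on `A` is critical: all its vertices are critical. -/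
def CriticalOn {V : Type*} (G : SimpleGraph V) (A : Set V) : Prop :=
  ∀ y ∈ A, IsCritVertexOn G A y

/-- The induced subgraph of `G` on `A` is weak bicritical: no vertex deletion increases the
domination number (`V⁺ = ∅`), and deleting any vertex that keeps the domination number
unchanged (a vertex of `V⁰`) yields a critical graph. -/
def WeakBicriticalOn {V : Type*} (G : SimpleGraph V) (A : Set V) : Prop :=
  (∀ y ∈ A, domNumOn G (A \ {y}) ≤ domNumOn G A) ∧
  (∀ y ∈ A, domNumOn G (A \ {y}) = domNumOn G A → CriticalOn G (A \ {y}))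

lemma isDomOn_self {V : Type*} (G : SimpleGraph V) (A : Set V) : IsDomOn G A A :=
  ⟨subset_rfl, fun v hv => ⟨v, hv, Or.inl rfl⟩⟩

lemma exists_minDom {V : Type*} (G : SimpleGraph V) (A : Set V) :
    ∃ S, IsDomOn G A S ∧ S.ncard = domNumOn G A := by
  have hne : {n | ∃ S : Set V, IsDomOn G A S ∧ S.ncard = n}.Nonempty :=
    ⟨A.ncard, A, isDomOn_self G A, rfl⟩
  exact Nat.sInf_mem hne

lemma domNumOn_le {V : Type*} (G : SimpleGraph V) {A S : Set V} (h : IsDomOn G A S) :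
    domNumOn G A ≤ S.ncard :=
  Nat.sInf_le ⟨S, h, rfl⟩

lemma isDomOn_union {V : Type*} (G : SimpleGraph V) {A1 A2 S1 S2 : Set V}
    (h1 : IsDomOn G A1 S1) (h2 : IsDomOn G A2 S2) : IsDomOn G (A1 ∪ A2) (S1 ∪ S2) := by
  obtain ⟨hs1, hd1⟩ := h1
  obtain ⟨hs2, hd2⟩ := h2
  refine ⟨union_subset_union hs1 hs2, ?_⟩
  rintro v (hv | hv)
  · obtain ⟨s, hs, h⟩ := hd1 v hv; exact ⟨s, Set.mem_union_left _ hs, h⟩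
  · obtain ⟨s, hs, h⟩ := hd2 v hv; exact ⟨s, Set.mem_union_right _ hs, h⟩

lemma domNumOn_union_le {V : Type*} [Fintype V] (G : SimpleGraph V) (A1 A2 : Set V) :
    domNumOn G (A1 ∪ A2) ≤ domNumOn G A1 + domNumOn G A2 := by
  obtain ⟨S1, h1, c1⟩ := exists_minDom G A1
  obtain ⟨S2, h2, c2⟩ := exists_minDom G A2
  calc domNumOn G (A1 ∪ A2) ≤ (S1 ∪ S2).ncard := domNumOn_le G (isDomOn_union G h1 h2)
    _ ≤ S1.ncard + S2.ncard := Set.ncard_union_le _ _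
    _ = _ := by rw [c1, c2]

/-- Coalescence: if G is weak bicritical and y is a vertex of H₁ that is not a critical
vertex of H₁, then γ(H₁ − y) = γ(H₁). -/
theorem stmt_16 {V : Type*} [Fintype V] (G : SimpleGraph V) (x : V) (V1 V2 : Set V)
    (hunion : V1 ∪ V2 = Set.univ) (hinter : V1 ∩ V2 = {x})
    (hsep : ∀ a ∈ V1, ∀ b ∈ V2, a ≠ x → b ≠ x → ¬ G.Adj a b)
    (hx1 : ∃ a ∈ V1, G.Adj x a) (hx2 : ∃ b ∈ V2, G.Adj x b)
    (hwb : WeakBicriticalOn G Set.univ) (y : V) (hy : y ∈ V1)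
    (hnc : ¬ IsCritVertexOn G V1 y) :
    domNumOn G (V1 \ {y}) = domNumOn G V1 := by
  classical
  have hx12 : x ∈ V1 ∩ V2 := by rw [hinter]; exact rfl
  have hxV1 : x ∈ V1 := hx12.1
  have hxV2 : x ∈ V2 := hx12.2
  have memV12 : ∀ v : V, v ∈ V1 ∨ v ∈ V2 := by
    intro v
    have h : v ∈ V1 ∪ V2 := by rw [hunion]; exact mem_univ v
    exact h
  have uniq : ∀ v, v ∈ V1 → v ∈ V2 → v = x := by
    intro v h1 h2
    have h : v ∈ V1 ∩ V2 := ⟨h1, h2⟩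
    rw [hinter] at h; exact h
  obtain ⟨a, haV1, hxa⟩ := hx1
  obtain ⟨b, hbV2, hxb⟩ := hx2
  have hax : a ≠ x := hxa.ne'
  have hbx : b ≠ x := hxb.ne'
  have haV2 : a ∉ V2 := fun h => hax (uniq a haV1 h)
  have hbV1 : b ∉ V1 := fun h => hbx (uniq b h hbV2)
  -- dominators of non-cut V1 vertices lie in V1, and symmetrically
  have dom_side1 : ∀ (D : Set V) (v : V), v ∈ V1 → v ≠ x →
      (∃ s ∈ D, s = v ∨ G.Adj s v) → ∃ s ∈ D ∩ V1, s = v ∨ G.Adj s v := by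
    rintro D v hv hvx ⟨s, hsD, hs⟩
    by_cases hsV1 : s ∈ V1
    · exact ⟨s, ⟨hsD, hsV1⟩, hs⟩
    · have hsV2 : s ∈ V2 := (memV12 s).resolve_left hsV1
      have hsx : s ≠ x := fun h => hsV1 (h ▸ hxV1)
      rcases hs with h | h
      · subst h; exact absurd hv hsV1
      · exact absurd h.symm (hsep v hv s hsV2 hvx hsx)
  have dom_side2 : ∀ (D : Set V) (v : V), v ∈ V2 → v ≠ x →
      (∃ s ∈ D, s = v ∨ G.Adj s v) → ∃ s ∈ D ∩ V2, s = v ∨ G.Adj s v := by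
    rintro D v hv hvx ⟨s, hsD, hs⟩
    by_cases hsV2 : s ∈ V2
    · exact ⟨s, ⟨hsD, hsV2⟩, hs⟩
    · have hsV1 : s ∈ V1 := (memV12 s).resolve_right hsV2
      have hsx : s ≠ x := fun h => hsV2 (h ▸ hxV2)
      rcases hs with h | h
      · subst h; exact absurd hv hsV2
      · exact absurd h (hsep s hsV1 v hv hsx hvx)
  have card_split : ∀ D : Set V,
      (D ∩ V1).ncard + (D ∩ V2).ncard = D.ncard + (D ∩ {x}).ncard := by
    intro D
    have hu : (D ∩ V1) ∪ (D ∩ V2) = D := by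
      rw [← inter_union_distrib_left, hunion, inter_univ]
    have hi : (D ∩ V1) ∩ (D ∩ V2) = D ∩ {x} := by
      rw [← hinter]; ext v; simp only [mem_inter_iff]; tauto
    have h := Set.ncard_union_add_ncard_inter (D ∩ V1) (D ∩ V2) (Set.toFinite _) (Set.toFinite _)
    rw [hu, hi] at h
    omega
  -- splitting lower bound on sets avoiding x
  have split : ∀ A : Set V, A ⊆ univ \ {x} →
      domNumOn G (A ∩ V1) + domNumOn G (A ∩ V2) ≤ domNumOn G A := by
    intro A hA
    obtain ⟨D, ⟨hDsub, hDdom⟩, hDcard⟩ := exists_minDom G A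
    have hxD : x ∉ D := fun h => (hA (hDsub h)).2 rfl
    have h1 : IsDomOn G (A ∩ V1) (D ∩ V1) := by
      refine ⟨inter_subset_inter_left _ hDsub, ?_⟩
      rintro v ⟨hvA, hvV1⟩
      exact dom_side1 D v hvV1 (fun h => (hA hvA).2 h) (hDdom v hvA)
    have h2 : IsDomOn G (A ∩ V2) (D ∩ V2) := by
      refine ⟨inter_subset_inter_left _ hDsub, ?_⟩
      rintro v ⟨hvA, hvV2⟩
      exact dom_side2 D v hvV2 (fun h => (hA hvA).2 h) (hDdom v hvA)
    have hempty : D ∩ {x} = ∅ := by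
      ext v
      simp only [mem_inter_iff, mem_singleton_iff, mem_empty_iff_false, iff_false, not_and]
      rintro hvD rfl; exact hxD hvD
    have hc := card_split D
    rw [hempty, Set.ncard_empty] at hc
    calc domNumOn G (A ∩ V1) + domNumOn G (A ∩ V2)
        ≤ (D ∩ V1).ncard + (D ∩ V2).ncard := Nat.add_le_add (domNumOn_le G h1) (domNumOn_le G h2)
      _ = D.ncard := by omega
      _ = domNumOn G A := hDcard
  -- upper bounds across the cut
  have hU1 : (V1 \ {x}) ∪ V2 = univ := by
    rw [eq_univ_iff_forall]; intro v
    rcases memV12 v with h | h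
    · by_cases hvx : v = x
      · exact Or.inr (hvx ▸ hxV2)
      · exact Or.inl ⟨h, hvx⟩
    · exact Or.inr h
  have hU2 : V1 ∪ (V2 \ {x}) = univ := by
    rw [eq_univ_iff_forall]; intro v
    rcases memV12 v with h | h
    · exact Or.inl h
    · by_cases hvx : v = x
      · exact Or.inl (hvx ▸ hxV1)
      · exact Or.inr ⟨h, hvx⟩
  have hub1 : domNumOn G univ ≤ domNumOn G (V1 \ {x}) + domNumOn G V2 := by
    calc domNumOn G univ = domNumOn G ((V1 \ {x}) ∪ V2) := by rw [hU1]
      _ ≤ _ := domNumOn_union_le G _ _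
  have hub2 : domNumOn G univ ≤ domNumOn G V1 + domNumOn G (V2 \ {x}) := by
    calc domNumOn G univ = domNumOn G (V1 ∪ (V2 \ {x})) := by rw [hU2]
      _ ≤ _ := domNumOn_union_le G _ _
  have hk2m2 : domNumOn G V2 ≤ domNumOn G (V2 \ {x}) + 1 := by
    obtain ⟨M, ⟨hMs, hMd⟩, hMc⟩ := exists_minDom G (V2 \ {x})
    have hdom : IsDomOn G V2 (M ∪ {x}) := by
      refine ⟨union_subset (hMs.trans diff_subset) (singleton_subset_iff.mpr hxV2), ?_⟩
      intro v hv
      by_cases hvx : v = x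
      · exact ⟨x, Set.mem_union_right _ rfl, Or.inl hvx.symm⟩
      · obtain ⟨s, hs, h⟩ := hMd v ⟨hv, hvx⟩
        exact ⟨s, Set.mem_union_left _ hs, h⟩
    calc domNumOn G V2 ≤ (M ∪ {x}).ncard := domNumOn_le G hdom
      _ ≤ M.ncard + ({x} : Set V).ncard := Set.ncard_union_le _ _
      _ = domNumOn G (V2 \ {x}) + 1 := by rw [hMc, Set.ncard_singleton]
  -- key combine bound used in the contradiction
  have combine : domNumOn G univ ≤
      domNumOn G ((V1 \ {x}) \ {a}) + domNumOn G ((V2 \ {x}) \ {b}) + 1 := by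
    obtain ⟨L, ⟨hLs, hLd⟩, hLc⟩ := exists_minDom G ((V1 \ {x}) \ {a})
    obtain ⟨N, ⟨hNs, hNd⟩, hNc⟩ := exists_minDom G ((V2 \ {x}) \ {b})
    have hxmem : x ∈ L ∪ N ∪ {x} := Set.mem_union_right _ rfl
    have hdom : IsDomOn G univ (L ∪ N ∪ {x}) := by
      refine ⟨subset_univ _, ?_⟩
      intro v _
      by_cases hvx : v = x
      · exact ⟨x, hxmem, Or.inl hvx.symm⟩
      rcases memV12 v with h | h
      · by_cases hva : v = a
        · exact ⟨x, hxmem, Or.inr (by rw [hva]; exact hxa)⟩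
        · obtain ⟨s, hs, hh⟩ := hLd v ⟨⟨h, hvx⟩, hva⟩
          exact ⟨s, Set.mem_union_left _ (Set.mem_union_left _ hs), hh⟩
      · by_cases hvb : v = b
        · exact ⟨x, hxmem, Or.inr (by rw [hvb]; exact hxb)⟩
        · obtain ⟨s, hs, hh⟩ := hNd v ⟨⟨h, hvx⟩, hvb⟩
          exact ⟨s, Set.mem_union_left _ (Set.mem_union_right _ hs), hh⟩
    have c1 : (L ∪ N ∪ {x}).ncard ≤ (L ∪ N).ncard + 1 := by
      calc (L ∪ N ∪ {x}).ncard ≤ (L ∪ N).ncard + ({x} : Set V).ncard := Set.ncard_union_le _ _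
        _ = (L ∪ N).ncard + 1 := by rw [Set.ncard_singleton]
    have c2 : (L ∪ N).ncard ≤ L.ncard + N.ncard := Set.ncard_union_le _ _
    have := domNumOn_le G hdom
    omega
  -- main decomposition inequality for deleting y ∈ V1
  have mainA : domNumOn G (V1 \ {y}) + domNumOn G V2 ≤ domNumOn G (univ \ {y}) + 1 := by
    by_cases hyx : y = x
    · subst hyx
      have hE1 : (univ \ {y}) ∩ V1 = V1 \ {y} := by
        ext v; simp only [mem_inter_iff, mem_diff, mem_univ, true_and]; tauto
      have hE2 : (univ \ {y}) ∩ V2 = V2 \ {y} := by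
        ext v; simp only [mem_inter_iff, mem_diff, mem_univ, true_and]; tauto
      have hs := split (univ \ {y}) subset_rfl
      rw [hE1, hE2] at hs
      omega
    · have hyV2 : y ∉ V2 := fun h => hyx (uniq y hy h)
      obtain ⟨D, ⟨hDsub, hDdom⟩, hDc⟩ := exists_minDom G (univ \ {y})
      have hyD : y ∉ D := fun h => (hDsub h).2 rfl
      have hDV1sub : D ∩ V1 ⊆ V1 \ {y} := fun s hs => ⟨hs.2, fun h => hyD (h ▸ hs.1)⟩
      have hdom1 : ∀ v ∈ V1 \ {y}, v ≠ x → ∃ s ∈ D ∩ V1, s = v ∨ G.Adj s v := by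
        rintro v ⟨hv1, hvy⟩ hvx
        exact dom_side1 D v hv1 hvx (hDdom v ⟨mem_univ v, hvy⟩)
      have hdom2 : ∀ v ∈ V2, v ≠ x → ∃ s ∈ D ∩ V2, s = v ∨ G.Adj s v := by
        intro v hv hvx
        have hvy : v ∉ ({y} : Set V) := fun h => hyV2 (h ▸ hv)
        exact dom_side2 D v hv hvx (hDdom v ⟨mem_univ v, hvy⟩)
      have hc := card_split D
      by_cases hxD : x ∈ D
      · have h1 : IsDomOn G (V1 \ {y}) (D ∩ V1) := by
          refine ⟨hDV1sub, ?_⟩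
          intro v hv
          by_cases hvx : v = x
          · exact ⟨x, ⟨hxD, hxV1⟩, Or.inl hvx.symm⟩
          · exact hdom1 v hv hvx
        have h2 : IsDomOn G V2 (D ∩ V2) := by
          refine ⟨inter_subset_right, ?_⟩
          intro v hv
          by_cases hvx : v = x
          · exact ⟨x, ⟨hxD, hxV2⟩, Or.inl hvx.symm⟩
          · exact hdom2 v hv hvx
        have hxc : D ∩ {x} = {x} := by
          ext v
          simp only [mem_inter_iff, mem_singleton_iff]
          exact ⟨fun h => h.2, fun h => ⟨h ▸ hxD, h⟩⟩
        rw [hxc, Set.ncard_singleton] at hc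
        have b1 := domNumOn_le G h1
        have b2 := domNumOn_le G h2
        omega
      · have hempty : D ∩ {x} = ∅ := by
          ext v
          simp only [mem_inter_iff, mem_singleton_iff, mem_empty_iff_false, iff_false, not_and]
          rintro hvD rfl; exact hxD hvD
        rw [hempty, Set.ncard_empty] at hc
        have hxdom : ∃ s ∈ D, s = x ∨ G.Adj s x :=
          hDdom x ⟨mem_univ x, fun h => hyx (Eq.symm h)⟩
        obtain ⟨s, hsD, hsx⟩ := hxdom
        have hsadj : G.Adj s x := by
          rcases hsx with h | h
          · subst h; exact absurd hsD hxD
          · exact h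
        rcases memV12 s with hsV1 | hsV2
        · have h1 : IsDomOn G (V1 \ {y}) (D ∩ V1) := by
            refine ⟨hDV1sub, ?_⟩
            intro v hv
            by_cases hvx : v = x
            · exact ⟨s, ⟨hsD, hsV1⟩, Or.inr (by rw [hvx]; exact hsadj)⟩
            · exact hdom1 v hv hvx
          have h2 : IsDomOn G V2 (D ∩ V2 ∪ {x}) := by
            refine ⟨union_subset inter_subset_right (singleton_subset_iff.mpr hxV2), ?_⟩
            intro v hv
            by_cases hvx : v = x
            · exact ⟨x, Set.mem_union_right _ rfl, Or.inl hvx.symm⟩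
            · obtain ⟨t, ht, hh⟩ := hdom2 v hv hvx
              exact ⟨t, Set.mem_union_left _ ht, hh⟩
          have b1 := domNumOn_le G h1
          have b2 := domNumOn_le G h2
          have c2 : (D ∩ V2 ∪ {x}).ncard ≤ (D ∩ V2).ncard + 1 := by
            calc (D ∩ V2 ∪ {x}).ncard ≤ (D ∩ V2).ncard + ({x} : Set V).ncard :=
                  Set.ncard_union_le _ _
              _ = (D ∩ V2).ncard + 1 := by rw [Set.ncard_singleton]
          omega
        · have h2 : IsDomOn G V2 (D ∩ V2) := by
            refine ⟨inter_subset_right, ?_⟩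
            intro v hv
            by_cases hvx : v = x
            · exact ⟨s, ⟨hsD, hsV2⟩, Or.inr (by rw [hvx]; exact hsadj)⟩
            · exact hdom2 v hv hvx
          have h1 : IsDomOn G (V1 \ {y}) (D ∩ V1 ∪ {x}) := by
            refine ⟨union_subset hDV1sub
              (singleton_subset_iff.mpr ⟨hxV1, fun h => hyx (Eq.symm h)⟩), ?_⟩
            intro v hv
            by_cases hvx : v = x
            · exact ⟨x, Set.mem_union_right _ rfl, Or.inl hvx.symm⟩
            · obtain ⟨t, ht, hh⟩ := hdom1 v hv hvx
              exact ⟨t, Set.mem_union_left _ ht, hh⟩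
          have b1 := domNumOn_le G h1
          have b2 := domNumOn_le G h2
          have c1 : (D ∩ V1 ∪ {x}).ncard ≤ (D ∩ V1).ncard + 1 := by
            calc (D ∩ V1 ∪ {x}).ncard ≤ (D ∩ V1).ncard + ({x} : Set V).ncard :=
                  Set.ncard_union_le _ _
              _ = (D ∩ V1).ncard + 1 := by rw [Set.ncard_singleton]
          omega
  -- the key global bound: γ(G) + 1 ≤ γ(H₁) + γ(H₂)
  have key : domNumOn G univ + 1 ≤ domNumOn G V1 + domNumOn G V2 := by
    by_contra hcon
    push_neg at hcon
    have hle : domNumOn G V1 + domNumOn G V2 ≤ domNumOn G univ := by omega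
    have hE1 : (univ \ {x}) ∩ V1 = V1 \ {x} := by
      ext v; simp only [mem_inter_iff, mem_diff, mem_univ, true_and]; tauto
    have hE2 : (univ \ {x}) ∩ V2 = V2 \ {x} := by
      ext v; simp only [mem_inter_iff, mem_diff, mem_univ, true_and]; tauto
    have hsplitx := split (univ \ {x}) subset_rfl
    rw [hE1, hE2] at hsplitx
    have hwb1x := hwb.1 x (mem_univ x)
    have hgm : domNumOn G (univ \ {x}) = domNumOn G univ := by omega
    have hcrit := hwb.2 x (mem_univ x) hgm
    have hca := hcrit a ⟨mem_univ a, hax⟩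
    have hcb := hcrit b ⟨mem_univ b, hbx⟩
    have hca' : domNumOn G ((univ \ {x}) \ {a}) < domNumOn G (univ \ {x}) := hca
    have hcb' : domNumOn G ((univ \ {x}) \ {b}) < domNumOn G (univ \ {x}) := hcb
    have hsa := split ((univ \ {x}) \ {a}) diff_subset
    have hsb := split ((univ \ {x}) \ {b}) diff_subset
    have hE3 : ((univ \ {x}) \ {a}) ∩ V1 = (V1 \ {x}) \ {a} := by
      ext v
      simp only [mem_inter_iff, mem_diff, mem_univ, true_and, mem_singleton_iff]
      tauto
    have hE4 : ((univ \ {x}) \ {a}) ∩ V2 = V2 \ {x} := by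
      ext v
      simp only [mem_inter_iff, mem_diff, mem_univ, true_and, mem_singleton_iff]
      constructor
      · rintro ⟨⟨hvx, _⟩, hv2⟩; exact ⟨hv2, hvx⟩
      · rintro ⟨hv2, hvx⟩; exact ⟨⟨hvx, fun h => haV2 (h ▸ hv2)⟩, hv2⟩
    have hE5 : ((univ \ {x}) \ {b}) ∩ V1 = V1 \ {x} := by
      ext v
      simp only [mem_inter_iff, mem_diff, mem_univ, true_and, mem_singleton_iff]
      constructor
      · rintro ⟨⟨hvx, _⟩, hv1⟩; exact ⟨hv1, hvx⟩
      · rintro ⟨hv1, hvx⟩; exact ⟨⟨hvx, fun h => hbV1 (h ▸ hv1)⟩, hv1⟩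
    have hE6 : ((univ \ {x}) \ {b}) ∩ V2 = (V2 \ {x}) \ {b} := by
      ext v
      simp only [mem_inter_iff, mem_diff, mem_univ, true_and, mem_singleton_iff]
      tauto
    rw [hE3, hE4] at hsa
    rw [hE5, hE6] at hsb
    omega
  have hwb1y := hwb.1 y (mem_univ y)
  have hnc' : ¬ (domNumOn G (V1 \ {y}) < domNumOn G V1) := hnc
  omega
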